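/- Suppose E ⊆ ℝⁿ is contained in B(0,1/2) and satisfies the cube porosity property: there exists M ∈ ℕ, M ≥ 4, such that for every x ∈ ℝⁿ, every r > 0, and every coordinate direction i ∈ {1,…,n}, there exists a grid point g in Gr(x,r,i,M) with A(g, r/M) ⊆ A(x,r) \ E. Then for every x ∈ ℝⁿ, i ∈ {1,…,n}, and k ∈ ℕ, the set V_x^i(2^{-1}M^{-k}) ∩ E ∩ A(x,1) can be covered by (M^{n-1} − 1)^k half-open axis-parallel cubes of side length M^{-k}, where V_x^i(δ) = {y ∈ ℝⁿ : |y^i − x^i| < δ}. -/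

import Mathlib

open Metric Set

/-- The half-open axis-parallel cube of side `r` centered at `c`. -/
def hcube {n : ℕ} (c : EuclideanSpace ℝ (Fin n)) (r : ℝ) : Set (EuclideanSpace ℝ (Fin n)) :=
  {y | ∀ i, y i ∈ Set.Ico (c i - r/2) (c i + r/2)}

/-- The grid `Gr(x,r,i,q)`: points of `A(x,r)` with `i`-th coordinate `x i` and the
other coordinates taken from the uniform `q`-grid. -/
def grid {n : ℕ} (x : EuclideanSpace ℝ (Fin n)) (r : ℝ) (i : Fin n) (q : ℕ) :
    Set (EuclideanSpace ℝ (Fin n)) :=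
  {g | g i = x i ∧ ∀ j : Fin n, j ≠ i → ∃ k : ℕ, 1 ≤ k ∧ k ≤ q ∧
      g j = (x j - r/2) + (r/(2*q)) * (2*k - 1)}

/-!
Points of `A(c, r)` within `r / (2M)` of the hyperplane `V_x^i` lie in the `M^{n-1}` cubes of
side `r / M` centred at the grid `Gr(c', r, i, M)`, where `c'` is the projection of `c` onto
`V_x^i`; porosity at `(c', r)` makes one of these cubes miss `E`, so `M^{n-1} - 1` of them
suffice. Iterating inside every surviving cube, with the strip narrowing by the factor `M`
each time, gives `(M^{n-1} - 1)^k` cubes of side `M^{-k}`.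
-/

section GridCover

variable {n : ℕ}

lemma exists_fin_mem_Ico {a u t : ℝ} (hu : 0 < u) {M : ℕ} (ht : t ∈ Ico a (a + M * u)) :
    ∃ m : Fin M, t ∈ Ico (a + m * u) (a + (m + 1) * u) := by
  have hnonneg : 0 ≤ (t - a) / u := div_nonneg (by linarith [ht.1]) hu.le
  have hlt : ⌊(t - a) / u⌋₊ < M := by
    rw [Nat.floor_lt hnonneg, div_lt_iff₀ hu]
    linarith [ht.2]
  refine ⟨⟨_, hlt⟩, ?_, ?_⟩
  · have := (le_div_iff₀ hu).1 (Nat.floor_le hnonneg)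
    linarith
  · have := (div_lt_iff₀ hu).1 (Nat.lt_floor_add_one ((t - a) / u))
    linarith

/-- The point of `Gr(c, r, i, M)` whose `j`-th coordinate is the centre of the
`(f j)`-th of the `M` subintervals (numbered from `0`). -/
noncomputable def gridPoint (c : EuclideanSpace ℝ (Fin n)) (r : ℝ) (i : Fin n) (M : ℕ)
    (f : {j : Fin n // j ≠ i} → Fin M) : EuclideanSpace ℝ (Fin n) :=
  WithLp.toLp 2 fun j =>
    if h : j = i then c i else c j - r / 2 + r / (2 * M) * (2 * (f ⟨j, h⟩ : ℕ) + 1)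

variable {c : EuclideanSpace ℝ (Fin n)} {r : ℝ} {i : Fin n} {M : ℕ}

lemma gridPoint_apply_self (f : {j : Fin n // j ≠ i} → Fin M) :
    gridPoint c r i M f i = c i := by
  simp [gridPoint]

lemma gridPoint_apply_of_ne (f : {j : Fin n // j ≠ i} → Fin M) {j : Fin n} (h : j ≠ i) :
    gridPoint c r i M f j = c j - r / 2 + r / (2 * M) * (2 * (f ⟨j, h⟩ : ℕ) + 1) := by
  simp [gridPoint, h]

lemma grid_subset_range_gridPoint : grid c r i M ⊆ range (gridPoint c r i M) := by
  rintro g ⟨hgi, hg⟩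
  choose k hk1 hkM hgk using hg
  refine ⟨fun j => ⟨k j j.2 - 1, by have := hk1 j j.2; have := hkM j j.2; omega⟩, ?_⟩
  ext j
  by_cases h : j = i
  · subst h
    rw [gridPoint_apply_self, hgi]
  · rw [gridPoint_apply_of_ne _ h, hgk j h]
    push_cast [hk1 j h]
    ring

lemma card_image_gridPoint_le [DecidableEq (EuclideanSpace ℝ (Fin n))] :
    (Finset.univ.image (gridPoint c r i M)).card ≤ M ^ (n - 1) := by
  refine Finset.card_image_le.trans_eq ?_
  simp [Fintype.card_subtype_compl]

lemma exists_gridPoint_mem_hcube (hr : 0 < r) (hM : 0 < M) {y : EuclideanSpace ℝ (Fin n)}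
    (hyi : |y i - c i| < 2⁻¹ * (r / M))
    (hy : ∀ j, j ≠ i → y j ∈ Ico (c j - r / 2) (c j + r / 2)) :
    ∃ f, y ∈ hcube (gridPoint c r i M f) (r / M) := by
  have hM' : (M : ℝ) ≠ 0 := by positivity
  have hu : 0 < r / M := by positivity
  have hcentre : ∀ m : ℝ, r / (2 * M) * (2 * m + 1) = m * (r / M) + r / M / 2 := by
    intro m
    field_simp
  have hend : ∀ j, c j - r / 2 + M * (r / M) = c j + r / 2 := by
    intro j
    field_simp
    ring
  choose m hm using fun j : {j : Fin n // j ≠ i} =>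
    exists_fin_mem_Ico hu (by rw [hend]; exact hy j j.2)
  refine ⟨m, fun j => ?_⟩
  by_cases h : j = i
  · subst h
    rw [gridPoint_apply_self]
    constructor <;> linarith [abs_lt.1 hyi]
  · rw [gridPoint_apply_of_ne _ h, hcentre]
    obtain ⟨hlo, hhi⟩ := hm ⟨j, h⟩
    constructor <;> linarith

end GridCover

def IsGridPorous {n : ℕ} (E : Set (EuclideanSpace ℝ (Fin n))) (M : ℕ) : Prop :=
  ∀ (x : EuclideanSpace ℝ (Fin n)) (r : ℝ), 0 < r → ∀ i : Fin n,
    ∃ g ∈ grid x r i M, hcube g (r / M) ⊆ hcube x r \ E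

namespace IsGridPorous

variable {n : ℕ} {E : Set (EuclideanSpace ℝ (Fin n))} {M : ℕ}

lemma exists_cover_strip_inter_hcube (hE : IsGridPorous E M) (hM : 0 < M)
    (x : EuclideanSpace ℝ (Fin n)) (i : Fin n) (c : EuclideanSpace ℝ (Fin n)) {r : ℝ}
    (hr : 0 < r) :
    ∃ s : Finset (EuclideanSpace ℝ (Fin n)), s.card ≤ M ^ (n - 1) - 1 ∧
      {y | |y i - x i| < 2⁻¹ * (r / M)} ∩ E ∩ hcube c r ⊆ ⋃ c' ∈ s, hcube c' (r / M) := by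
  classical
  set c' : EuclideanSpace ℝ (Fin n) := WithLp.toLp 2 (Function.update c.ofLp i (x i))
  obtain ⟨g, hg, hgE⟩ := hE c' r hr i
  obtain ⟨f₀, rfl⟩ := grid_subset_range_gridPoint hg
  have hf₀ := Finset.mem_image_of_mem (gridPoint c' r i M) (Finset.mem_univ f₀)
  refine ⟨(Finset.univ.image (gridPoint c' r i M)).erase (gridPoint c' r i M f₀), ?_, ?_⟩
  · rw [Finset.card_erase_of_mem hf₀]
    exact Nat.sub_le_sub_right card_image_gridPoint_le 1
  · rintro y ⟨⟨hyi, hyE⟩, hyc⟩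
    obtain ⟨f, hf⟩ := exists_gridPoint_mem_hcube (c := c') (i := i) (y := y) hr hM
      (by simpa [c'] using hyi)
      (fun j hj => by simpa [c', hj] using hyc j)
    have hne : gridPoint c' r i M f ≠ gridPoint c' r i M f₀ :=
      fun h => (hgE (h ▸ hf)).2 hyE
    exact mem_biUnion
      (Finset.mem_erase.2 ⟨hne, Finset.mem_image_of_mem _ (Finset.mem_univ f)⟩) hf

lemma exists_cover_strip_inter_hcube_pow (hE : IsGridPorous E M) (hM : 0 < M)
    (x : EuclideanSpace ℝ (Fin n)) (i : Fin n) (c : EuclideanSpace ℝ (Fin n)) {r : ℝ}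
    (hr : 0 < r) (k : ℕ) :
    ∃ s : Finset (EuclideanSpace ℝ (Fin n)), s.card ≤ (M ^ (n - 1) - 1) ^ k ∧
      {y | |y i - x i| < 2⁻¹ * (r / M ^ k)} ∩ E ∩ hcube c r ⊆
        ⋃ c' ∈ s, hcube c' (r / M ^ k) := by
  classical
  induction k with
  | zero =>
    exact ⟨{c}, by simp, fun y hy => mem_biUnion (Finset.mem_singleton_self c) (by simpa using hy.2)⟩
  | succ k ih =>
    obtain ⟨s, hs, hcov⟩ := ih
    have hrk : 0 < r / M ^ k := by positivity
    choose t ht htcov using fun c' => hE.exists_cover_strip_inter_hcube hM x i c' hrk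
    refine ⟨s.biUnion t, ?_, ?_⟩
    · calc (s.biUnion t).card ≤ ∑ c' ∈ s, (t c').card := Finset.card_biUnion_le
        _ ≤ s.card * (M ^ (n - 1) - 1) := Finset.sum_le_card_nsmul _ _ _ fun c' _ => ht c'
        _ ≤ (M ^ (n - 1) - 1) ^ k * (M ^ (n - 1) - 1) := Nat.mul_le_mul_right _ hs
        _ = (M ^ (n - 1) - 1) ^ (k + 1) := (pow_succ _ _).symm
    · rintro y ⟨⟨hyi, hyE⟩, hyc⟩
      replace hyi : |y i - x i| < 2⁻¹ * (r / M ^ k / M) := by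
        rwa [pow_succ, ← div_div] at hyi
      rw [pow_succ, ← div_div]
      have hyi' : |y i - x i| < 2⁻¹ * (r / M ^ k) := hyi.trans_le <|
        mul_le_mul_of_nonneg_left (div_le_self hrk.le (Nat.one_le_cast.2 hM)) (by norm_num)
      obtain ⟨c', hc', hyc'⟩ := mem_iUnion₂.1 (hcov ⟨⟨hyi', hyE⟩, hyc⟩)
      obtain ⟨c'', hc'', hyc''⟩ := mem_iUnion₂.1 (htcov c' ⟨⟨hyi, hyE⟩, hyc'⟩)
      exact mem_biUnion (Finset.mem_biUnion.2 ⟨c', hc', hc''⟩) hyc''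

end IsGridPorous

theorem stmt7_general {n : ℕ} (E : Set (EuclideanSpace ℝ (Fin n)))
    (M : ℕ) (hM : 4 ≤ M)
    (hpor : ∀ (x : EuclideanSpace ℝ (Fin n)) (r : ℝ), 0 < r → ∀ i : Fin n,
      ∃ g ∈ grid x r i M, hcube g (r / M) ⊆ hcube x r \ E) :
    ∀ (x : EuclideanSpace ℝ (Fin n)) (i : Fin n) (k : ℕ),
      ∃ s : Finset (EuclideanSpace ℝ (Fin n)), s.card ≤ (M ^ (n-1) - 1) ^ k ∧
        {y : EuclideanSpace ℝ (Fin n) | |y i - x i| < 2⁻¹ * (M:ℝ) ^ (-(k:ℤ))} ∩ E ∩ hcube x 1 ⊆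
          ⋃ c ∈ s, hcube c ((M:ℝ) ^ (-(k:ℤ))) := by
  intro x i k
  have hMk : (M : ℝ) ^ (-(k : ℤ)) = 1 / M ^ k := by rw [zpow_neg, zpow_natCast, one_div]
  rw [hMk]
  exact IsGridPorous.exists_cover_strip_inter_hcube_pow hpor (by omega) x i x one_pos k

/-- Iterated grid porosity: if `E` has the cube porosity property with parameter `M`,
then the strip `V_x^i(2⁻¹M^{-k}) ∩ E ∩ A(x,1)` is covered by `(M^{n-1}-1)^k`
half-open cubes of side `M^{-k}`. -/
theorem stmt7 {n : ℕ} (E : Set (EuclideanSpace ℝ (Fin n)))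
    (hE : E ⊆ closedBall 0 (1/2)) (M : ℕ) (hM : 4 ≤ M)
    (hpor : ∀ (x : EuclideanSpace ℝ (Fin n)) (r : ℝ), 0 < r → ∀ i : Fin n,
      ∃ g ∈ grid x r i M, hcube g (r / M) ⊆ hcube x r \ E) :
    ∀ (x : EuclideanSpace ℝ (Fin n)) (i : Fin n) (k : ℕ),
      ∃ s : Finset (EuclideanSpace ℝ (Fin n)), s.card ≤ (M ^ (n-1) - 1) ^ k ∧
        {y : EuclideanSpace ℝ (Fin n) | |y i - x i| < 2⁻¹ * (M:ℝ) ^ (-(k:ℤ))} ∩ E ∩ hcube x 1 ⊆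
          ⋃ c ∈ s, hcube c ((M:ℝ) ^ (-(k:ℤ))) :=
  stmt7_general E M hM hpor
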